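/- arXiv:2504.19393 — 2 statements merged into one kernel-verified Lean document; each statement's English description precedes it below -/
import Mathlib

section
/- Let $X$ be an $n\times p$ real matrix, $\lambda>0$, $\tilde{y}\in\mathbb{R}^n$, and let $W = XX^{\top}+\lambda I_n$. For the $i$th column $X_i$ of $X$, the $i$th diagonal entry of $(X^{\top}X+\lambda I_p)^{-1} + \dfrac{(X^{\top}X+\lambda I_p)^{-1}X^{\top}\tilde{y}\tilde{y}^{\top}X(X^{\top}X+\lambda I_p)^{-1}}{\tilde{y}^{\top}\tilde{y} - \tilde{y}^{\top}X(X^{\top}X+\lambda I_p)^{-1}X^{\top}\tilde{y}}$ equals $\dfrac{1}{\lambda} + \dfrac{(X_i^{\top}W^{-1}\tilde{y})^2}{\lambda\,\tilde{y}^{\top}W^{-1}\tilde{y}} - \dfrac{1}{\lambda}X_i^{\top}W^{-1}X_i$, provided the denominator $\tilde{y}^{\top}\tilde{y} - \tilde{y}^{\top}X(X^{\top}X+\lambda I_p)^{-1}X^{\top}\tilde{y}$ is nonzero. -/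
/-!
With `A = XᵀX + λ I` and `W = XXᵀ + λ I`, the push-through identity `A Xᵀ = Xᵀ W` gives
`A⁻¹ Xᵀ = Xᵀ W⁻¹` and `A⁻¹ = λ⁻¹ (I - Xᵀ W⁻¹ X)`. Hence `X A⁻¹ Xᵀ = I - λ W⁻¹`, so the
denominator is `λ yᵀ W⁻¹ y`, and the rank-one correction is `u uᵀ` with `u = Xᵀ W⁻¹ y`,
whose `i`th diagonal entry is `(X_iᵀ W⁻¹ y)²`.
-/

open Matrix

namespace Matrix

theorem mul_vecMulVec_mul_transpose {l m α : Type*} [Fintype m] [CommSemiring α]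
    (M : Matrix l m α) (x y : m → α) :
    M * vecMulVec x y * Mᵀ = vecMulVec (M *ᵥ x) (M *ᵥ y) := by
  rw [mul_vecMulVec, vecMulVec_mul, vecMul_transpose]

theorem inv_mul_transpose_mul_vecMulVec_mul_mul_inv {m n R : Type*} [Fintype m] [Fintype n]
    [DecidableEq n] [CommRing R] {A : Matrix n n R} (hA : Aᵀ = A) (X : Matrix m n R)
    (x y : m → R) :
    A⁻¹ * Xᵀ * vecMulVec x y * X * A⁻¹ = vecMulVec ((A⁻¹ * Xᵀ) *ᵥ x) ((A⁻¹ * Xᵀ) *ᵥ y) := by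
  have hX : X * A⁻¹ = (A⁻¹ * Xᵀ)ᵀ := by
    rw [transpose_mul, transpose_transpose, transpose_nonsing_inv, hA]
  rw [Matrix.mul_assoc _ X, hX, mul_vecMulVec_mul_transpose]

section PushThrough

variable {m n : Type*} [Fintype m] [Fintype n] [DecidableEq m] [DecidableEq n]

theorem inv_mul_eq_mul_inv_of_mul_eq_mul {R : Type*} [CommRing R] {A : Matrix n n R}
    {W : Matrix m m R} {B : Matrix n m R} (hA : IsUnit A.det) (hW : IsUnit W.det)
    (h : A * B = B * W) : A⁻¹ * B = B * W⁻¹ := by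
  rw [← nonsing_inv_mul_cancel_left (A := A) (B * W⁻¹) hA, ← Matrix.mul_assoc A, h,
    mul_nonsing_inv_cancel_right _ _ hW]

theorem transpose_mul_self_add_smul_one_mul_transpose {R : Type*} [CommSemiring R]
    (X : Matrix m n R) (l : R) :
    (Xᵀ * X + l • 1) * Xᵀ = Xᵀ * (X * Xᵀ + l • 1) := by
  simp only [Matrix.add_mul, Matrix.mul_add, Matrix.smul_mul, Matrix.mul_smul, Matrix.one_mul,
    Matrix.mul_one, Matrix.mul_assoc]

theorem inv_transpose_mul_self_add_smul_one_mul_transpose {R : Type*} [CommRing R]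
    (X : Matrix m n R) {l : R} (hA : IsUnit (Xᵀ * X + l • 1).det)
    (hW : IsUnit (X * Xᵀ + l • 1).det) :
    (Xᵀ * X + l • 1)⁻¹ * Xᵀ = Xᵀ * (X * Xᵀ + l • 1)⁻¹ :=
  inv_mul_eq_mul_inv_of_mul_eq_mul hA hW (transpose_mul_self_add_smul_one_mul_transpose X l)

theorem inv_transpose_mul_self_add_smul_one {K : Type*} [Field K] (X : Matrix m n K) {l : K}
    (hl : l ≠ 0) (hW : IsUnit (X * Xᵀ + l • 1).det) :
    (Xᵀ * X + l • 1)⁻¹ = l⁻¹ • (1 - Xᵀ * (X * Xᵀ + l • 1)⁻¹ * X) := by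
  apply inv_eq_right_inv
  have hpush : (Xᵀ * X + l • 1) * (Xᵀ * (X * Xᵀ + l • 1)⁻¹ * X) = Xᵀ * X := by
    rw [← Matrix.mul_assoc, ← Matrix.mul_assoc, transpose_mul_self_add_smul_one_mul_transpose,
      mul_nonsing_inv_cancel_right _ _ hW]
  rw [Matrix.mul_smul, Matrix.mul_sub, Matrix.mul_one, hpush, add_sub_cancel_left, smul_smul,
    inv_mul_cancel₀ hl, one_smul]

theorem mul_inv_transpose_mul_self_add_smul_one_mul_transpose {R : Type*} [CommRing R]
    (X : Matrix m n R) {l : R} (hA : IsUnit (Xᵀ * X + l • 1).det)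
    (hW : IsUnit (X * Xᵀ + l • 1).det) :
    X * (Xᵀ * X + l • 1)⁻¹ * Xᵀ = 1 - l • (X * Xᵀ + l • 1)⁻¹ :=
  calc X * (Xᵀ * X + l • 1)⁻¹ * Xᵀ
      = (X * Xᵀ + l • 1) * (X * Xᵀ + l • 1)⁻¹ - l • (X * Xᵀ + l • 1)⁻¹ := by
        rw [Matrix.mul_assoc, inv_transpose_mul_self_add_smul_one_mul_transpose X hA hW,
          Matrix.add_mul, Matrix.smul_mul, Matrix.one_mul, add_sub_cancel_right,
          Matrix.mul_assoc]
    _ = 1 - l • (X * Xᵀ + l • 1)⁻¹ := by rw [mul_nonsing_inv _ hW]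

end PushThrough

theorem posDef_transpose_mul_self_add_smul_one {m n : Type*} [Fintype m] [Fintype n]
    [DecidableEq n] (X : Matrix m n ℝ) {l : ℝ} (hl : 0 < l) : (Xᵀ * X + l • 1).PosDef :=
  PosDef.posSemidef_add (posSemidef_conjTranspose_mul_self X) (PosDef.one.smul hl)

end Matrix

theorem ridge_partial_variance_diag_general {n p : ℕ} (X : Matrix (Fin n) (Fin p) ℝ)
    (l : ℝ) (hl : 0 < l) (y : Fin n → ℝ) (i : Fin p) :
    ((Xᵀ * X + l • (1 : Matrix (Fin p) (Fin p) ℝ))⁻¹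
      + (y ⬝ᵥ y - y ⬝ᵥ ((X * (Xᵀ * X + l • (1 : Matrix (Fin p) (Fin p) ℝ))⁻¹ * Xᵀ) *ᵥ y))⁻¹ •
        ((Xᵀ * X + l • (1 : Matrix (Fin p) (Fin p) ℝ))⁻¹ * Xᵀ * vecMulVec y y * X *
          (Xᵀ * X + l • (1 : Matrix (Fin p) (Fin p) ℝ))⁻¹)) i i
      = 1 / l
        + ((fun k => X k i) ⬝ᵥ ((X * Xᵀ + l • (1 : Matrix (Fin n) (Fin n) ℝ))⁻¹ *ᵥ y)) ^ 2
            / (l * (y ⬝ᵥ ((X * Xᵀ + l • (1 : Matrix (Fin n) (Fin n) ℝ))⁻¹ *ᵥ y)))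
        - (1 / l) * ((fun k => X k i) ⬝ᵥ ((X * Xᵀ + l • (1 : Matrix (Fin n) (Fin n) ℝ))⁻¹ *ᵥ (fun k => X k i))) := by
  have hA := (isUnit_iff_isUnit_det _).mp (posDef_transpose_mul_self_add_smul_one X hl).isUnit
  have hW := (isUnit_iff_isUnit_det _).mp (posDef_transpose_mul_self_add_smul_one Xᵀ hl).isUnit
  rw [transpose_transpose] at hW
  have hsymm : (Xᵀ * X + l • (1 : Matrix (Fin p) (Fin p) ℝ))ᵀ = Xᵀ * X + l • 1 := by
    simp [transpose_add, transpose_mul]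
  rw [mul_inv_transpose_mul_self_add_smul_one_mul_transpose X hA hW,
    inv_mul_transpose_mul_vecMulVec_mul_mul_inv hsymm,
    inv_transpose_mul_self_add_smul_one_mul_transpose X hA hW,
    inv_transpose_mul_self_add_smul_one X hl.ne' hW, ← mulVec_mulVec]
  set W := X * Xᵀ + l • (1 : Matrix (Fin n) (Fin n) ℝ)
  have hden : y ⬝ᵥ y - y ⬝ᵥ (1 - l • W⁻¹) *ᵥ y = l * (y ⬝ᵥ W⁻¹ *ᵥ y) := by
    rw [sub_mulVec, one_mulVec, smul_mulVec, dotProduct_sub, dotProduct_smul, sub_sub_cancel,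
      smul_eq_mul]
  have hdiag : (Xᵀ * W⁻¹ * X) i i = (fun k => X k i) ⬝ᵥ W⁻¹ *ᵥ fun k => X k i := by
    rw [Matrix.mul_assoc]
    rfl
  have hcol : (Xᵀ *ᵥ W⁻¹ *ᵥ y) i = (fun k => X k i) ⬝ᵥ W⁻¹ *ᵥ y := rfl
  rw [Matrix.add_apply, Matrix.smul_apply, Matrix.smul_apply, Matrix.sub_apply, one_apply_eq,
    hdiag, hden, vecMulVec_apply, hcol, smul_eq_mul, smul_eq_mul]
  ring

theorem ridge_partial_variance_diag {n p : ℕ} (X : Matrix (Fin n) (Fin p) ℝ)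
    (l : ℝ) (hl : 0 < l) (y : Fin n → ℝ) (i : Fin p)
    (hd : y ⬝ᵥ y - y ⬝ᵥ ((X * (Xᵀ * X + l • (1 : Matrix (Fin p) (Fin p) ℝ))⁻¹ * Xᵀ) *ᵥ y) ≠ 0) :
    ((Xᵀ * X + l • (1 : Matrix (Fin p) (Fin p) ℝ))⁻¹
      + (y ⬝ᵥ y - y ⬝ᵥ ((X * (Xᵀ * X + l • (1 : Matrix (Fin p) (Fin p) ℝ))⁻¹ * Xᵀ) *ᵥ y))⁻¹ •
        ((Xᵀ * X + l • (1 : Matrix (Fin p) (Fin p) ℝ))⁻¹ * Xᵀ * vecMulVec y y * X *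
          (Xᵀ * X + l • (1 : Matrix (Fin p) (Fin p) ℝ))⁻¹)) i i
      = 1 / l
        + ((fun k => X k i) ⬝ᵥ ((X * Xᵀ + l • (1 : Matrix (Fin n) (Fin n) ℝ))⁻¹ *ᵥ y)) ^ 2
            / (l * (y ⬝ᵥ ((X * Xᵀ + l • (1 : Matrix (Fin n) (Fin n) ℝ))⁻¹ *ᵥ y)))
        - (1 / l) * ((fun k => X k i) ⬝ᵥ ((X * Xᵀ + l • (1 : Matrix (Fin n) (Fin n) ℝ))⁻¹ *ᵥ (fun k => X k i))) :=
  ridge_partial_variance_diag_general X l hl y i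
end

section
/- Let $X = VDU^{\top}\Sigma^{1/2}$ where $V$ is an $n\times n$ orthogonal matrix, $D$ an $n\times n$ invertible diagonal matrix, $U$ a $p\times n$ matrix with $U^{\top}U = I_n$, and $\Sigma$ a $p\times p$ symmetric positive definite matrix. Then for any $\lambda > 0$, $X^{\top}(XX^{\top}+\lambda I_n)^{-1}X = \Sigma^{1/2}U\,(U^{\top}\Sigma U + \lambda D^{-2})^{-1}\,U^{\top}\Sigma^{1/2}$. -/
/-!
Write `X = A W` with `A = V D` and `W = Uᵀ Σ^{1/2}`. Then `X Xᵀ + λ I = A (W Wᵀ + λ A⁻¹ A⁻ᵀ) Aᵀ`,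
the outer factors `A`, `Aᵀ` cancel against those of `X` and `Xᵀ`, and orthogonality of `V` gives
`A⁻¹ A⁻ᵀ = D⁻²`. Because `(P Q)⁻¹ = Q⁻¹ P⁻¹` holds for every pair of square matrices in Mathlib
(the inverse being defined through the adjugate), the middle factor need not be invertible.
-/

open Matrix

section PosSemidefSqrt

open scoped ComplexOrder

/-- The square root of a positive semidefinite matrix, as `Matrix.PosSemidef.sqrt` was defined
in the older Mathlib (removed since). -/
noncomputable def posSemidefSqrt {n 𝕜 : Type*} [Fintype n] [DecidableEq n] [RCLike 𝕜]
    {A : Matrix n n 𝕜} (hA : A.PosSemidef) : Matrix n n 𝕜 :=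
  (hA.1.eigenvectorUnitary : Matrix n n 𝕜) * diagonal ((↑) ∘ (√·) ∘ hA.1.eigenvalues) *
    (star hA.1.eigenvectorUnitary : Matrix n n 𝕜)

end PosSemidefSqrt

section PosSemidefSqrt

open scoped ComplexOrder

variable {n 𝕜 : Type*} [Fintype n] [DecidableEq n] [RCLike 𝕜] {A : Matrix n n 𝕜}

theorem posSemidefSqrt_conjTranspose (hA : A.PosSemidef) :
    (posSemidefSqrt hA)ᴴ = posSemidefSqrt hA := by
  simp [posSemidefSqrt, conjTranspose_mul, Matrix.mul_assoc, Matrix.star_eq_conjTranspose,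
    Function.comp_def, Pi.star_def]

theorem posSemidefSqrt_mul_self (hA : A.PosSemidef) : posSemidefSqrt hA * posSemidefSqrt hA = A := by
  have hW : (star hA.1.eigenvectorUnitary : Matrix n n 𝕜) *
      (hA.1.eigenvectorUnitary : Matrix n n 𝕜) = 1 :=
    Unitary.coe_star_mul_self _
  conv_rhs => rw [hA.1.spectral_theorem]
  rw [Unitary.conjStarAlgAut_apply, posSemidefSqrt]
  simp only [Matrix.mul_assoc]
  rw [← Matrix.mul_assoc (star _ : Matrix n n 𝕜), hW, Matrix.one_mul,
    ← Matrix.mul_assoc (diagonal _), diagonal_mul_diagonal]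
  congr 3
  ext i
  simp [← RCLike.ofReal_mul, Real.mul_self_sqrt (hA.eigenvalues_nonneg i)]

end PosSemidefSqrt

section
variable {m n R : Type*} [Fintype m] [Fintype n] [DecidableEq n] [CommRing R]

theorem Matrix.transpose_mul_inv_mul_transpose_add_mul_of_isUnit {A : Matrix n n R}
    (hA : IsUnit A.det) (W : Matrix n m R) (C : Matrix n n R) :
    (A * W)ᵀ * ((A * W) * (A * W)ᵀ + C)⁻¹ * (A * W) =
      Wᵀ * (W * Wᵀ + A⁻¹ * C * A⁻¹ᵀ)⁻¹ * W := by
  have hAt : IsUnit Aᵀ.det := by rwa [det_transpose]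
  have hfactor : (A * W) * (A * W)ᵀ + C = A * (W * Wᵀ + A⁻¹ * C * A⁻¹ᵀ) * Aᵀ := by
    rw [transpose_nonsing_inv, Matrix.mul_add, Matrix.add_mul, transpose_mul]
    simp only [Matrix.mul_assoc, mul_nonsing_inv_cancel_left _ _ hA,
      nonsing_inv_mul_cancel_right _ _ hAt]
  rw [hfactor, Matrix.mul_inv_rev, Matrix.mul_inv_rev, transpose_mul]
  simp only [Matrix.mul_assoc, mul_nonsing_inv_cancel_left _ _ hAt,
    nonsing_inv_mul_cancel_left _ _ hA]

end

theorem ridge_projection_svd_form_general {n p : ℕ}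
    (V : Matrix (Fin n) (Fin n) ℝ) (hV : Vᵀ * V = 1)
    (d : Fin n → ℝ) (hd : ∀ i, d i ≠ 0)
    (U : Matrix (Fin p) (Fin n) ℝ)
    (Sig : Matrix (Fin p) (Fin p) ℝ) (hSig : Sig.PosDef)
    (l : ℝ) :
    (V * Matrix.diagonal d * Uᵀ * posSemidefSqrt hSig.posSemidef)ᵀ *
        ((V * Matrix.diagonal d * Uᵀ * posSemidefSqrt hSig.posSemidef) *
            (V * Matrix.diagonal d * Uᵀ * posSemidefSqrt hSig.posSemidef)ᵀ
          + l • (1 : Matrix (Fin n) (Fin n) ℝ))⁻¹ *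
        (V * Matrix.diagonal d * Uᵀ * posSemidefSqrt hSig.posSemidef)
      = posSemidefSqrt hSig.posSemidef * U *
          (Uᵀ * Sig * U + l • ((Matrix.diagonal d)⁻¹ * (Matrix.diagonal d)⁻¹))⁻¹ *
          Uᵀ * posSemidefSqrt hSig.posSemidef := by
  set S := posSemidefSqrt hSig.posSemidef
  set D := Matrix.diagonal d
  have hS : Sᵀ = S := by
    rw [← conjTranspose_eq_transpose_of_trivial, posSemidefSqrt_conjTranspose]
  have hD : IsUnit D.det := by
    simpa [D, det_diagonal, Finset.prod_ne_zero_iff] using hd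
  have hVD : IsUnit (V * D).det := by
    rw [det_mul]
    exact (isUnit_det_of_left_inverse hV).mul hD
  have hgram : (Uᵀ * S) * (Uᵀ * S)ᵀ = Uᵀ * Sig * U := by
    rw [transpose_mul, hS, transpose_transpose, Matrix.mul_assoc, ← Matrix.mul_assoc S,
      posSemidefSqrt_mul_self, Matrix.mul_assoc]
  have hDt : Dᵀ = D := diagonal_transpose d
  have hpenalty : (V * D)⁻¹ * (l • 1) * (V * D)⁻¹ᵀ = l • (D⁻¹ * D⁻¹) := by
    rw [Matrix.mul_inv_rev, inv_eq_left_inv hV, transpose_mul, transpose_transpose,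
      transpose_nonsing_inv, hDt]
    simp only [Matrix.mul_smul, Matrix.smul_mul, Matrix.mul_one, Matrix.mul_assoc,
      ← Matrix.mul_assoc Vᵀ V, hV, Matrix.one_mul]
  have hX : V * D * Uᵀ * S = (V * D) * (Uᵀ * S) := by simp only [Matrix.mul_assoc]
  rw [hX,
    Matrix.transpose_mul_inv_mul_transpose_add_mul_of_isUnit hVD, hgram, hpenalty,
    transpose_mul, hS, transpose_transpose]
  simp only [Matrix.mul_assoc]

theorem ridge_projection_svd_form {n p : ℕ}
    (V : Matrix (Fin n) (Fin n) ℝ) (hV : Vᵀ * V = 1)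
    (d : Fin n → ℝ) (hd : ∀ i, d i ≠ 0)
    (U : Matrix (Fin p) (Fin n) ℝ) (hU : Uᵀ * U = 1)
    (Sig : Matrix (Fin p) (Fin p) ℝ) (hSig : Sig.PosDef)
    (l : ℝ) (hl : 0 < l) :
    (V * Matrix.diagonal d * Uᵀ * posSemidefSqrt hSig.posSemidef)ᵀ *
        ((V * Matrix.diagonal d * Uᵀ * posSemidefSqrt hSig.posSemidef) *
            (V * Matrix.diagonal d * Uᵀ * posSemidefSqrt hSig.posSemidef)ᵀ
          + l • (1 : Matrix (Fin n) (Fin n) ℝ))⁻¹ *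
        (V * Matrix.diagonal d * Uᵀ * posSemidefSqrt hSig.posSemidef)
      = posSemidefSqrt hSig.posSemidef * U *
          (Uᵀ * Sig * U + l • ((Matrix.diagonal d)⁻¹ * (Matrix.diagonal d)⁻¹))⁻¹ *
          Uᵀ * posSemidefSqrt hSig.posSemidef :=
  ridge_projection_svd_form_general V hV d hd U Sig hSig l
end
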